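/- arXiv:2206.15395 — 2 statements merged into one kernel-verified Lean document; each statement's English description precedes it below -/
import Mathlib

section
/- In the full-certification case (S_I = {⊥, I} for all I), the single-deviator mediator-augmented game Γ̂ has at most |H|·B·D histories, where B is the maximum branching factor and D is the depth of the game tree of Γ. This follows because in every history h^{Ia} of Γ̂ in which a player deviated at infoset I with recommended action a, we must have I ⪯ h (I precedes h in the tree order). -/
/-- In the full-certification case (S_I = {⊥, I}), every history of the
augmented game Γ̂ is identified by a pair (h, σ) where σ is ⊥ or a pair (I, a) with
I ⪯ h (the deviation infoset precedes h) and a an action at I.  Since each node has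
at most D - 1 proper ancestors' infosets preceding it (D = depth) and each infoset has at
most B actions (B = maximum branching factor ≥ 1), we get `|Ĥ| ≤ |H| · B · D`. -/
theorem stmt5 {Hhat H I Act : Type*}
    [Fintype Hhat] [Fintype H] [Fintype I] [Fintype Act] [DecidableEq I]
    (prec : I → H → Prop) [∀ i h, Decidable (prec i h)]   -- I ⪯ h
    (A : I → Finset Act)                                   -- actions at each infoset
    (B D : ℕ) (hB : 1 ≤ B)
    (hact : ∀ i, (A i).card ≤ B)                           -- branching factor bound
    (hanc : ∀ h, (Finset.univ.filter fun i => prec i h).card + 1 ≤ D)  -- depth bound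
    (f : Hhat → H × Option (I × Act)) (hf : Function.Injective f)
    (hvalid : ∀ x i a, (f x).2 = some (i, a) → prec i (f x).1 ∧ a ∈ A i) :
    Fintype.card Hhat ≤ Fintype.card H * B * D := by
  classical
  set T : H → Finset (Option (I × Act)) := fun h =>
    insert none ((Finset.univ.filter (fun i => prec i h)).biUnion
      fun i => (A i).image fun a => some (i, a)) with hTdef
  have hT : ∀ h, (T h).card ≤ B * D := by
    intro h
    set n := (Finset.univ.filter (fun i => prec i h)).card with hn
    calc (T h).card
        ≤ ((Finset.univ.filter (fun i => prec i h)).biUnion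
            fun i => (A i).image fun a => some (i, a)).card + 1 :=
          Finset.card_insert_le _ _
      _ ≤ (∑ i ∈ Finset.univ.filter (fun i => prec i h),
            ((A i).image fun a => some (i, a)).card) + 1 :=
          Nat.add_le_add_right (Finset.card_biUnion_le) 1
      _ ≤ (∑ _i ∈ Finset.univ.filter (fun i => prec i h), B) + 1 := by
          refine Nat.add_le_add_right (Finset.sum_le_sum fun i _ => ?_) 1
          exact (Finset.card_image_le).trans (hact i)
      _ = n * B + 1 := by rw [Finset.sum_const, smul_eq_mul]
      _ ≤ n * B + B := Nat.add_le_add_left hB _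
      _ = (n + 1) * B := by ring
      _ ≤ D * B := Nat.mul_le_mul_right B (hanc h)
      _ = B * D := Nat.mul_comm _ _
  set S : Finset (H × Option (I × Act)) :=
    Finset.univ.biUnion (fun h => (T h).image fun σ => (h, σ)) with hS
  have hmaps : ∀ x : Hhat, f x ∈ S := by
    intro x
    refine Finset.mem_biUnion.2 ⟨(f x).1, Finset.mem_univ _, Finset.mem_image.2 ⟨(f x).2, ?_, rfl⟩⟩
    rcases h2 : (f x).2 with _ | ⟨i, a⟩
    · simp [hTdef]
    · obtain ⟨hp, ha⟩ := hvalid x i a h2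
      simp only [hTdef, Finset.mem_insert, Finset.mem_biUnion, Finset.mem_filter,
        Finset.mem_univ, true_and, Finset.mem_image]
      exact Or.inr ⟨i, hp, a, ha, rfl⟩
  have h1 : Fintype.card Hhat ≤ S.card := by
    rw [← Finset.card_univ]
    exact Finset.card_le_card_of_injOn f (fun x _ => hmaps x) (Function.Injective.injOn hf)
  refine h1.trans ?_
  calc S.card ≤ ∑ h : H, ((T h).image fun σ => (h, σ)).card := Finset.card_biUnion_le
    _ ≤ ∑ h : H, (B * D) := Finset.sum_le_sum fun h _ =>
        (Finset.card_image_le).trans (hT h)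
    _ = Fintype.card H * (B * D) := by
        rw [Finset.sum_const, smul_eq_mul, Finset.card_univ]
    _ = Fintype.card H * B * D := (Nat.mul_assoc _ _ _).symm
end

section
/- In the counterexample game of the appendix, the following mediator strategy is a valid persuasion scheme achieving expected utility 3/4 for both players: recommend exit to the offered player when s ∈ {▲, ▼}, inform player 1 of the value of s when s ∈ {H, T} (so she guesses correctly), and recommend independent uniform random actions in any matching pennies subgame; moreover, obeying these recommendations is a best response for each player. -/
namespace Stmt11

/-- Matching-pennies payoff to the matching player. -/
noncomputable def mp (a b : Bool) : ℝ := if a = b then 1 else -1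

/-- A deviation strategy of player 1 against the persuasion scheme:
first component: `none` = obey the exit recommendation at ▲; `some f` = enter and play
`f r` upon the (uniform) matching-pennies recommendation `r`;
second: response to the recommendation in the ▼ matching-pennies subgame (unreached when
player 2 obeys and exits); third: guess as a function of the revealed value of s
(`true` = H), the obedient map being the identity. -/
abbrev P1Dev := Option (Bool → Bool) × (Bool → Bool) × (Bool → Bool)

/-- Analogously for player 2: response in the ▲ pennies subgame (unreached when player 1
obeys and exits), and `none` = obey exit at ▼, `some g` = enter and respond to the
recommendation. -/
abbrev P2Dev := (Bool → Bool) × Option (Bool → Bool)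

/-- Expected utility of player 1 deviating with `d` while player 2 obeys: chance uniform
on {▲, ▼, H, T}; at ▲, exiting gives 0 and entering gives the expectation of pennies
against player 2's uniform action with an independent uniform recommendation; at ▼,
player 2 obediently exits, giving player 1 utility 1; at H and T, player 1 is told s and
guesses `d.2.2 s`. -/
noncomputable def v1 (d : P1Dev) : ℝ :=
  (d.1.elim 0 (fun f => (∑ m2 : Bool, ∑ r : Bool, mp m2 (f r)) / 4)
    + 1
    + (if d.2.2 true = true then 1 else 0)
    + (if d.2.2 false = false then 1 else 0)) / 4

/-- Expected utility of player 2 deviating with `d` while player 1 obeys: at ▲, player 1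
obediently exits, giving player 2 utility 1; at ▼, obeying exit gives 0, entering gives
the expectation of (negated) pennies against player 1's uniform recommended action with
an independent uniform recommendation; at H and T, player 1 guesses correctly, giving 1. -/
noncomputable def v2 (d : P2Dev) : ℝ :=
  (1
    + d.2.elim 0 (fun g => (∑ a : Bool, ∑ r : Bool, -(mp a (g r))) / 4)
    + 1 + 1) / 4

/-- Full obedience. -/
def obedient1 : P1Dev := (none, id, id)

def obedient2 : P2Dev := (id, none)

/-- the mediator strategy (recommend exit when s ∈ {▲, ▼}, reveal s to
player 1 when s ∈ {H, T}, recommend independent uniform actions in any matching-pennies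
subgame) is a valid persuasion scheme: obedience gives each player expected utility 3/4
and is a best response for each player. -/
theorem stmt11 :
    v1 obedient1 = 3 / 4 ∧ v2 obedient2 = 3 / 4 ∧
      (∀ d : P1Dev, v1 d ≤ v1 obedient1) ∧ (∀ d : P2Dev, v2 d ≤ v2 obedient2) := by
  have hsum : ∀ f : Bool → Bool, (∑ m2 : Bool, ∑ r : Bool, mp m2 (f r)) = 0 := by
    intro f
    simp [Fin.sum_univ_succ, mp]
    cases f true <;> cases f false <;> simp <;> ring
  have hsum2 : ∀ g : Bool → Bool, (∑ a : Bool, ∑ r : Bool, -(mp a (g r))) = 0 := by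
    intro g
    simp [Fin.sum_univ_succ, mp]
    cases g true <;> cases g false <;> simp <;> ring
  have h1 : v1 obedient1 = 3 / 4 := by simp [v1, obedient1]; norm_num
  have h2 : v2 obedient2 = 3 / 4 := by simp [v2, obedient2]; norm_num
  refine ⟨h1, h2, ?_, ?_⟩
  · intro d
    rw [h1]
    unfold v1
    have e1 : d.1.elim 0 (fun f => (∑ m2 : Bool, ∑ r : Bool, mp m2 (f r)) / 4) ≤ (0 : ℝ) := by
      cases d.1 with
      | none => simp
      | some f => simp only [Option.elim]; rw [hsum f]; norm_num
    have e2 : (if d.2.2 true = true then (1:ℝ) else 0) ≤ 1 := by split <;> norm_num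
    have e3 : (if d.2.2 false = false then (1:ℝ) else 0) ≤ 1 := by split <;> norm_num
    linarith
  · intro d
    rw [h2]
    unfold v2
    have e1 : d.2.elim 0 (fun g => (∑ a : Bool, ∑ r : Bool, -(mp a (g r))) / 4) ≤ (0 : ℝ) := by
      cases d.2 with
      | none => simp
      | some g => simp only [Option.elim]; rw [hsum2 g]; norm_num
    linarith

end Stmt11
end
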